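/- Let W ⊆ ℝ⁴ × (ℝ⁴ \ {0}) be open and L : W → ℝ smooth and everywhere positive, with invertible vertical Hessian g^L(x,y), entries g^L_{ij}(x,y) = (1/2)∂²L/∂yⁱ∂yʲ(x,y) and inverse entries g^{L ij}. Define: the spray Gⁱ[L] := (1/4)Σ_j g^{L ij}(Σ_k y^k ∂²L/∂x^k∂yʲ − ∂L/∂xʲ); the nonlinear connection coefficients Gⁱ_j[L] := ∂Gⁱ[L]/∂yʲ; the horizontal derivatives δ_j := ∂/∂xʲ − Σ_l G^l_j[L]·∂/∂y^l; the curvature Rⁱ_{jk}[L] := δ_k Gⁱ_j[L] − δ_j Gⁱ_k[L]; and the Finsler Ricci scalar R[L] := Σ_{i,k} Rⁱ_{ik}[L]·y^k. Fix a real number α > −5 and set ε[L] := L^α · R[L] · |det g^L|. Then for every t ∈ (0,1], ε[tL] = t^{α+4}·ε[L] pointwise on W, and consequently the Vainberg–Tonti Lagrangian 𝓛 := L · ∫₀¹ ε[tL] dt satisfies 𝓛 = (1/(α+5)) · L^{α+1} · R[L] · |det g^L| on W; in particular, for α = −4, 𝓛 = L^{−3}·R[L]·|det g^L|. -/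

import Mathlib

noncomputable section

/-- Vertical partial derivative `∂f/∂yʲ(x,y)` for `f = f(x,y)`. -/
def vd (f : (Fin 4 → ℝ) × (Fin 4 → ℝ) → ℝ) (j : Fin 4)
    (p : (Fin 4 → ℝ) × (Fin 4 → ℝ)) : ℝ :=
  fderiv ℝ (fun w => f (p.1, w)) p.2 (Pi.single j 1)

/-- Horizontal partial derivative `∂f/∂xʲ(x,y)` for `f = f(x,y)`. -/
def hd (f : (Fin 4 → ℝ) × (Fin 4 → ℝ) → ℝ) (j : Fin 4)
    (p : (Fin 4 → ℝ) × (Fin 4 → ℝ)) : ℝ :=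
  fderiv ℝ (fun u => f (u, p.2)) p.1 (Pi.single j 1)

/-- The vertical Hessian (L-metric) `g^L_{ij}(x,y) = (1/2) ∂²L/∂yⁱ∂yʲ (x,y)`. -/
def vmet (L : (Fin 4 → ℝ) × (Fin 4 → ℝ) → ℝ) (p : (Fin 4 → ℝ) × (Fin 4 → ℝ)) :
    Matrix (Fin 4) (Fin 4) ℝ :=
  Matrix.of fun i j => (1 / 2) * vd (vd L j) i p

/-- The geodesic spray coefficients
`Gⁱ[L] = (1/4) Σ_j g^{L ij} (Σ_k y^k ∂²L/∂x^k∂yʲ − ∂L/∂xʲ)`. -/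
def spray (L : (Fin 4 → ℝ) × (Fin 4 → ℝ) → ℝ) (i : Fin 4)
    (p : (Fin 4 → ℝ) × (Fin 4 → ℝ)) : ℝ :=
  (1 / 4) * ∑ j, (vmet L p)⁻¹ i j *
    ((∑ k, p.2 k * hd (vd L j) k p) - hd L j p)

/-- The Cartan nonlinear connection coefficients `Gⁱ_j = ∂Gⁱ/∂yʲ`. -/
def nlconn (L : (Fin 4 → ℝ) × (Fin 4 → ℝ) → ℝ) (i j : Fin 4)
    (p : (Fin 4 → ℝ) × (Fin 4 → ℝ)) : ℝ :=
  vd (spray L i) j p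

/-- The horizontal derivative `δ_j f = ∂f/∂xʲ − Σ_l G^l_j ∂f/∂y^l`. -/
def hder (L f : (Fin 4 → ℝ) × (Fin 4 → ℝ) → ℝ) (j : Fin 4)
    (p : (Fin 4 → ℝ) × (Fin 4 → ℝ)) : ℝ :=
  hd f j p - ∑ l, nlconn L l j p * vd f l p

/-- The nonlinear curvature `Rⁱ_{jk} = δ_k Gⁱ_j − δ_j Gⁱ_k`. -/
def curv (L : (Fin 4 → ℝ) × (Fin 4 → ℝ) → ℝ) (i j k : Fin 4)
    (p : (Fin 4 → ℝ) × (Fin 4 → ℝ)) : ℝ :=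
  hder L (nlconn L i j) k p - hder L (nlconn L i k) j p

/-- The Finsler Ricci scalar `R = Σ_{i,k} Rⁱ_{ik} y^k`. -/
def ricci (L : (Fin 4 → ℝ) × (Fin 4 → ℝ) → ℝ)
    (p : (Fin 4 → ℝ) × (Fin 4 → ℝ)) : ℝ :=
  ∑ i, ∑ k, curv L i i k p * p.2 k

/-- Rutz's scalar density `ε[L] = L^α · R[L] · |det g^L|`. -/
def rutzDensity (α : ℝ) (L : (Fin 4 → ℝ) × (Fin 4 → ℝ) → ℝ)
    (p : (Fin 4 → ℝ) × (Fin 4 → ℝ)) : ℝ :=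
  L p ^ α * ricci L p * |(vmet L p).det|

section Aux

lemma fderiv_cmul (t : ℝ) (ht : t ≠ 0) (g : (Fin 4 → ℝ) → ℝ) (x v : Fin 4 → ℝ) :
    fderiv ℝ (fun w => t * g w) x v = t * fderiv ℝ g x v := by
  by_cases h : DifferentiableAt ℝ g x
  · rw [fderiv_const_mul h]; rfl
  · have h2 : ¬ DifferentiableAt ℝ (fun w => t * g w) x := by
      intro hc
      have h3 : DifferentiableAt ℝ (fun w => t⁻¹ * (t * g w)) x := hc.const_mul t⁻¹
      have heq : (fun w => t⁻¹ * (t * g w)) = g := by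
        funext w; field_simp
      exact h (heq ▸ h3)
    rw [fderiv_zero_of_not_differentiableAt h, fderiv_zero_of_not_differentiableAt h2]
    simp

lemma vd_cmul (t : ℝ) (ht : t ≠ 0) (f : (Fin 4 → ℝ) × (Fin 4 → ℝ) → ℝ)
    (j : Fin 4) (p : (Fin 4 → ℝ) × (Fin 4 → ℝ)) :
    vd (fun q => t * f q) j p = t * vd f j p :=
  fderiv_cmul t ht (fun w => f (p.1, w)) p.2 _

lemma hd_cmul (t : ℝ) (ht : t ≠ 0) (f : (Fin 4 → ℝ) × (Fin 4 → ℝ) → ℝ)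
    (j : Fin 4) (p : (Fin 4 → ℝ) × (Fin 4 → ℝ)) :
    hd (fun q => t * f q) j p = t * hd f j p :=
  fderiv_cmul t ht (fun u => f (u, p.2)) p.1 _

lemma vd_cmul' (t : ℝ) (ht : t ≠ 0) (f : (Fin 4 → ℝ) × (Fin 4 → ℝ) → ℝ) (j : Fin 4) :
    vd (fun q => t * f q) j = fun p => t * vd f j p :=
  funext fun p => vd_cmul t ht f j p

lemma vmet_cmul (t : ℝ) (ht : t ≠ 0) (L : (Fin 4 → ℝ) × (Fin 4 → ℝ) → ℝ)
    (p : (Fin 4 → ℝ) × (Fin 4 → ℝ)) :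
    vmet (fun q => t * L q) p = t • vmet L p := by
  ext i j
  simp only [vmet, Matrix.smul_apply, Matrix.of_apply, smul_eq_mul,
    vd_cmul' t ht L j, vd_cmul t ht]
  ring

lemma matrix_smul_inv (t : ℝ) (ht : t ≠ 0) (M : Matrix (Fin 4) (Fin 4) ℝ) :
    (t • M)⁻¹ = t⁻¹ • M⁻¹ := by
  rw [Matrix.inv_def, Matrix.inv_def, Matrix.det_smul, Matrix.adjugate_smul,
    Fintype.card_fin]
  rw [smul_smul, smul_smul]
  congr 1
  simp only [Ring.inverse_eq_inv']
  rw [mul_inv, ← inv_pow]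
  have h4 : t⁻¹ ^ 4 * t ^ 3 = t⁻¹ := by
    field_simp
  linear_combination M.det⁻¹ * h4

lemma spray_cmul (t : ℝ) (ht : t ≠ 0) (L : (Fin 4 → ℝ) × (Fin 4 → ℝ) → ℝ) (i : Fin 4) :
    spray (fun q => t * L q) i = spray L i := by
  funext p
  unfold spray
  rw [vmet_cmul t ht, matrix_smul_inv t ht]
  congr 1
  apply Finset.sum_congr rfl
  intro j _
  simp only [Matrix.smul_apply, smul_eq_mul, vd_cmul' t ht L j, hd_cmul t ht]
  have hs : (∑ k, p.2 k * (t * hd (vd L j) k p)) = t * ∑ k, p.2 k * hd (vd L j) k p := by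
    rw [Finset.mul_sum]
    exact Finset.sum_congr rfl fun k _ => by ring
  rw [hs]
  field_simp

lemma nlconn_cmul (t : ℝ) (ht : t ≠ 0) (L : (Fin 4 → ℝ) × (Fin 4 → ℝ) → ℝ) :
    nlconn (fun q => t * L q) = nlconn L := by
  funext i j p
  unfold nlconn
  rw [spray_cmul t ht]

lemma ricci_cmul (t : ℝ) (ht : t ≠ 0) (L : (Fin 4 → ℝ) × (Fin 4 → ℝ) → ℝ)
    (p : (Fin 4 → ℝ) × (Fin 4 → ℝ)) :
    ricci (fun q => t * L q) p = ricci L p := by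
  unfold ricci curv hder
  rw [nlconn_cmul t ht]

lemma rutz_cmul (α t : ℝ) (ht : 0 < t) (L : (Fin 4 → ℝ) × (Fin 4 → ℝ) → ℝ)
    (p : (Fin 4 → ℝ) × (Fin 4 → ℝ)) (hLp : 0 < L p) :
    rutzDensity α (fun q => t * L q) p = t ^ (α + 4) * rutzDensity α L p := by
  have ht' : t ≠ 0 := ht.ne'
  unfold rutzDensity
  rw [ricci_cmul t ht', vmet_cmul t ht']
  simp only [Matrix.det_smul, Fintype.card_fin]
  have h1 : (t * L p) ^ α = t ^ α * L p ^ α := Real.mul_rpow ht.le hLp.le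
  have h2 : |t ^ (4 : ℕ) * (vmet L p).det| = t ^ (4 : ℕ) * |(vmet L p).det| := by
    rw [abs_mul, abs_pow, abs_of_pos ht]
  have h3 : t ^ (α + 4) = t ^ α * t ^ (4 : ℕ) := by
    rw [← Real.rpow_natCast t 4, ← Real.rpow_add ht]; norm_num
  rw [h1, h2, h3]
  ring

end Aux

/-- The Vainberg–Tonti Lagrangian of (the density form of) Rutz's equation: for `α > −5`,
`ε[tL] = t^{α+4} ε[L]` for `t ∈ (0,1]`, and hence
`𝓛 = L ∫₀¹ ε[tL] dt = (1/(α+5)) L^{α+1} R[L] |det g^L|`;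
in particular for `α = −4`, `𝓛 = L⁻³ R[L] |det g^L|`. -/

theorem vainberg_tonti_of_rutz (W : Set ((Fin 4 → ℝ) × (Fin 4 → ℝ)))
    (hWopen : IsOpen W) (hW0 : ∀ p ∈ W, p.2 ≠ (0 : Fin 4 → ℝ))
    (L : (Fin 4 → ℝ) × (Fin 4 → ℝ) → ℝ) (hLs : ContDiffOn ℝ (⊤ : ℕ∞) L W)
    (hLpos : ∀ p ∈ W, 0 < L p)
    (hinv : ∀ p ∈ W, IsUnit (vmet L p).det)
    (α : ℝ) (hα : -5 < α) :
    (∀ t ∈ Set.Ioc (0 : ℝ) 1, ∀ p ∈ W,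
        rutzDensity α (fun q => t * L q) p = t ^ (α + 4) * rutzDensity α L p) ∧
    (∀ p ∈ W,
        L p * ∫ t in (0:ℝ)..1, rutzDensity α (fun q => t * L q) p =
          (1 / (α + 5)) * L p ^ (α + 1) * ricci L p * |(vmet L p).det|) ∧
    (α = -4 → ∀ p ∈ W,
        L p * ∫ t in (0:ℝ)..1, rutzDensity α (fun q => t * L q) p =
          L p ^ (-3 : ℝ) * ricci L p * |(vmet L p).det|) := by
  have key : ∀ t ∈ Set.Ioc (0 : ℝ) 1, ∀ p ∈ W,
      rutzDensity α (fun q => t * L q) p = t ^ (α + 4) * rutzDensity α L p :=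
    fun t ht p hp => rutz_cmul α t ht.1 L p (hLpos p hp)
  have main : ∀ p ∈ W,
      L p * ∫ t in (0:ℝ)..1, rutzDensity α (fun q => t * L q) p =
        (1 / (α + 5)) * L p ^ (α + 1) * ricci L p * |(vmet L p).det| := by
    intro p hp
    have hLp := hLpos p hp
    have hint : (∫ t in (0:ℝ)..1, rutzDensity α (fun q => t * L q) p)
        = ∫ t in (0:ℝ)..1, t ^ (α + 4) * rutzDensity α L p := by
      rw [intervalIntegral.integral_of_le zero_le_one,
          intervalIntegral.integral_of_le zero_le_one]
      exact MeasureTheory.setIntegral_congr_fun measurableSet_Ioc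
        (fun t ht => key t ht p hp)
    rw [hint, intervalIntegral.integral_mul_const,
      integral_rpow (Or.inl (by linarith))]
    have h5 : α + 4 + 1 = α + 5 := by ring
    rw [h5, Real.one_rpow, Real.zero_rpow (by linarith)]
    unfold rutzDensity
    have hL1 : L p ^ (α + 1) = L p ^ α * L p := Real.rpow_add_one hLp.ne' α
    rw [hL1]
    ring
  refine ⟨key, main, ?_⟩
  intro hm4 p hp
  rw [main p hp, hm4]
  norm_num
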